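/- arXiv:1302.5021 — 2 statements merged into one kernel-verified Lean document; each statement's English description precedes it below -/
import Mathlib

section
/- With R_NC(W^(j)) = H(W^(j-1)) + (m - dim W^(j-1))·H_N(W^(j)|W^(j-1)), one has R_NC(W^(j)) ≤ H(V) (the Slepian-Wolf sum rate), with equality if and only if j = r. -/
open scoped BigOperators

open Classical in
/-- Base-2 Shannon entropy of the random variable `f` on the finite probability
space `(Ω, p)`. -/
noncomputable def mapEnt {Ω β : Type*} [Fintype Ω] [Fintype β]
    (p : Ω → ℝ) (f : Ω → β) : ℝ :=
  ∑ b : β, -((∑ ω ∈ Finset.univ.filter (fun ω => f ω = b), p ω) *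
      Real.logb 2 (∑ ω ∈ Finset.univ.filter (fun ω => f ω = b), p ω))

open Classical in
/-- Entropy of a subspace `U` of the space of `F`-valued random variables on `Ω`:
the joint entropy of the collection of all random variables in `U` (equivalently,
of any generating set). -/
noncomputable def subEnt {F Ω : Type*} [Field F] [Fintype F] [Fintype Ω]
    (p : Ω → ℝ) (U : Submodule F (Ω → F)) : ℝ :=
  mapEnt p (fun ω => (fun u : U => (u : Ω → F) ω))

/-- Normalized conditional entropy `H_N(U|W) = (H(W+U) - H(W)) / (dim(W+U) - dim W)`. -/
noncomputable def condNE {F Ω : Type*} [Field F] [Fintype F] [Fintype Ω]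
    (p : Ω → ℝ) (U W : Submodule F (Ω → F)) : ℝ :=
  (subEnt p (W ⊔ U) - subEnt p W) /
    ((Module.finrank F ↥(W ⊔ U) : ℝ) - (Module.finrank F ↥W : ℝ))

/-- `IsNEChain p V r W` says that `⊥ = W 0 ⊊ W 1 ⊊ ... ⊊ W r = V` is a strictly
increasing chain of subspaces of `V` such that for each `j`: (1) among all subspaces
of `V` strictly containing `W j`, `W (j+1)` has the least normalized conditional
entropy conditioned on `W j`, and (2) any subspace of `V` strictly containing `W j`
achieving this minimum is contained in `W (j+1)`. -/
def IsNEChain {F Ω : Type*} [Field F] [Fintype F] [Fintype Ω]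
    (p : Ω → ℝ) (V : Submodule F (Ω → F)) (r : ℕ) (W : ℕ → Submodule F (Ω → F)) : Prop :=
  W 0 = ⊥ ∧ W r = V ∧ (∀ j, j < r → W j < W (j + 1)) ∧ (∀ j, j ≤ r → W j ≤ V) ∧
  ∀ j, j < r →
    (∀ U : Submodule F (Ω → F), U ≤ V → W j < U →
        condNE p (W (j + 1)) (W j) ≤ condNE p U (W j)) ∧
    (∀ U : Submodule F (Ω → F), U ≤ V → W j < U →
        condNE p U (W j) = condNE p (W (j + 1)) (W j) → U ≤ W (j + 1))

/-!
The slopes `λ_ℓ = H_N(W^(ℓ+1)|W^(ℓ))` of the chain strictly increase: if `λ_{ℓ+1} ≤ λ_ℓ`, then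
`H_N(W^(ℓ+2)|W^(ℓ))`, a weighted average of the two, would also attain the minimum `λ_ℓ`,
forcing `W^(ℓ+2) ≤ W^(ℓ+1)`. So the entropy, as a piecewise linear function of the dimension
along the chain, is strictly convex at every vertex, and `R_NC(W^(j))` is the value at `m` of
the line extending its `j`-th piece. Such a line lies below the graph at `m = dim V`,
touching it exactly for the last piece.
-/

section Slopes

lemma sub_div_sub_le_of_sub_div_sub_le {A B C a b c : ℝ} (hab : a < b) (hbc : b < c)
    (h : (C - B) / (c - b) ≤ (B - A) / (b - a)) :
    (C - A) / (c - a) ≤ (B - A) / (b - a) := by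
  rw [div_le_div_iff₀ (by linarith) (by linarith)] at *
  nlinarith

lemma add_mul_slope_le_of_slope_lt {h d s : ℕ → ℝ} {r : ℕ}
    (hd : ∀ ℓ < r, d ℓ < d (ℓ + 1))
    (hstep : ∀ ℓ < r, h (ℓ + 1) = h ℓ + (d (ℓ + 1) - d ℓ) * s ℓ)
    (hs : ∀ ℓ, ℓ + 1 < r → s ℓ < s (ℓ + 1)) {i : ℕ} (hi : i < r) :
    h i + (d r - d i) * s i ≤ h r ∧ (h i + (d r - d i) * s i = h r ↔ i + 1 = r) := by
  set R : ℕ → ℝ := fun i => h i + (d r - d i) * s i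
  have hd_mono : StrictMonoOn d (Set.Iic r) :=
    strictMonoOn_Iic_of_lt_succ fun ℓ hℓ => by simpa using hd ℓ hℓ
  have hR_mono : StrictMonoOn R (Set.Iic (r - 1)) := by
    refine strictMonoOn_Iic_of_lt_succ fun ℓ hℓ => ?_
    have hdr : d (ℓ + 1) < d r :=
      hd_mono (by simp only [Set.mem_Iic]; omega) (Set.mem_Iic.2 le_rfl) (by omega)
    have hR : R (ℓ + 1) - R ℓ = (d r - d (ℓ + 1)) * (s (ℓ + 1) - s ℓ) := by
      simp only [R, hstep ℓ (by omega)]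
      ring
    have := mul_pos (sub_pos.2 hdr) (sub_pos.2 (hs ℓ (by omega)))
    simp only [Order.succ_eq_add_one]
    linarith
  have hR_last : R (r - 1) = h r := by
    have := hstep (r - 1) (by omega)
    rw [Nat.sub_add_cancel (by omega)] at this
    simp only [R, this]
  have hi' : i ∈ Set.Iic (r - 1) := by simp only [Set.mem_Iic]; omega
  have hlast : r - 1 ∈ Set.Iic (r - 1) := Set.mem_Iic.2 le_rfl
  refine ⟨hR_last ▸ (hR_mono.le_iff_le hi' hlast).2 (by omega), ?_⟩
  rw [← hR_last, hR_mono.eq_iff_eq hi' hlast]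
  omega

end Slopes

section Chain

variable {F Ω : Type*} [Field F] [Fintype F] [Fintype Ω] {p : Ω → ℝ}

lemma condNE_of_le {U W : Submodule F (Ω → F)} (h : W ≤ U) :
    condNE p U W = (subEnt p U - subEnt p W) /
      ((Module.finrank F U : ℝ) - (Module.finrank F W : ℝ)) := by
  rw [condNE, sup_eq_right.mpr h]

lemma subEnt_eq_add_mul_condNE {U W : Submodule F (Ω → F)} (h : W < U) :
    subEnt p U = subEnt p W +
      ((Module.finrank F U : ℝ) - (Module.finrank F W : ℝ)) * condNE p U W := by
  have hd : (Module.finrank F W : ℝ) < Module.finrank F U := by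
    exact_mod_cast Submodule.finrank_lt_finrank_of_lt h
  rw [condNE_of_le h.le, mul_div_cancel₀ _ (sub_pos.2 hd).ne']
  ring

namespace IsNEChain

variable {V : Submodule F (Ω → F)} {r : ℕ} {W : ℕ → Submodule F (Ω → F)}

lemma condNE_lt_condNE (hW : IsNEChain p V r W) {ℓ : ℕ} (hℓ : ℓ + 1 < r) :
    condNE p (W (ℓ + 1)) (W ℓ) < condNE p (W (ℓ + 2)) (W (ℓ + 1)) := by
  obtain ⟨-, -, hlt, hle, hopt⟩ := hW
  have h01 := hlt ℓ (by omega)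
  have h12 := hlt (ℓ + 1) hℓ
  have h02 := h01.trans h12
  obtain ⟨hmin, hmax⟩ := hopt ℓ (by omega)
  by_contra! hslope
  have hdim := fun {U W : Submodule F (Ω → F)} (h : W < U) =>
    (Nat.cast_lt (α := ℝ)).2 (Submodule.finrank_lt_finrank_of_lt h)
  have hchord : condNE p (W (ℓ + 2)) (W ℓ) ≤ condNE p (W (ℓ + 1)) (W ℓ) := by
    rw [condNE_of_le h01.le, condNE_of_le h12.le] at hslope
    rw [condNE_of_le h01.le, condNE_of_le h02.le]
    exact sub_div_sub_le_of_sub_div_sub_le (hdim h01) (hdim h12) hslope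
  have hWle := hmax _ (hle _ (by omega)) h02 (hchord.antisymm (hmin _ (hle _ (by omega)) h02))
  exact h12.not_ge hWle

end IsNEChain

end Chain

theorem stmt_13_general {F Ω : Type*} [Field F] [Fintype F] [Fintype Ω]
    (p : Ω → ℝ)
    {m : ℕ} (X : Fin m → (Ω → F)) (hX : LinearIndependent F X)
    (V : Submodule F (Ω → F)) (hV : V = Submodule.span F (Set.range X))
    (r : ℕ) (W : ℕ → Submodule F (Ω → F)) (hchain : IsNEChain p V r W)
    (j : ℕ) (hj1 : 1 ≤ j) (hjr : j ≤ r) :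
    subEnt p (W (j - 1))
        + ((m : ℝ) - (Module.finrank F ↥(W (j - 1)) : ℝ)) * condNE p (W j) (W (j - 1))
      ≤ subEnt p V ∧
    (subEnt p (W (j - 1))
        + ((m : ℝ) - (Module.finrank F ↥(W (j - 1)) : ℝ)) * condNE p (W j) (W (j - 1))
      = subEnt p V ↔ j = r) := by
  obtain ⟨-, hWr, hlt, -⟩ := id hchain
  have hm : (m : ℝ) = Module.finrank F (W r) := by
    rw [hWr, hV, finrank_span_eq_card hX, Fintype.card_fin]
  have key := add_mul_slope_le_of_slope_lt (h := fun ℓ => subEnt p (W ℓ))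
    (d := fun ℓ => (Module.finrank F (W ℓ) : ℝ)) (s := fun ℓ => condNE p (W (ℓ + 1)) (W ℓ))
    (fun ℓ hℓ => by exact_mod_cast Submodule.finrank_lt_finrank_of_lt (hlt ℓ hℓ))
    (fun ℓ hℓ => subEnt_eq_add_mul_condNE (hlt ℓ hℓ))
    (fun ℓ hℓ => hchain.condNE_lt_condNE hℓ) (i := j - 1) (by omega)
  rwa [Nat.sub_add_cancel hj1, ← hm, hWr] at key

/-- The nested-code sum rate
`R_NC(W^(j)) = H(W^(j-1)) + (m - dim W^(j-1))·H_N(W^(j)|W^(j-1))` satisfies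
`R_NC(W^(j)) ≤ H(V)` (the Slepian-Wolf sum rate), with equality if and only if `j = r`. -/
theorem stmt_13 {F Ω : Type*} [Field F] [Fintype F] [Fintype Ω]
    (p : Ω → ℝ) (hp : ∀ ω, 0 ≤ p ω) (hpsum : ∑ ω, p ω = 1)
    {m : ℕ} (X : Fin m → (Ω → F)) (hX : LinearIndependent F X)
    (V : Submodule F (Ω → F)) (hV : V = Submodule.span F (Set.range X))
    (r : ℕ) (W : ℕ → Submodule F (Ω → F)) (hchain : IsNEChain p V r W)
    (j : ℕ) (hj1 : 1 ≤ j) (hjr : j ≤ r) :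
    subEnt p (W (j - 1))
        + ((m : ℝ) - (Module.finrank F ↥(W (j - 1)) : ℝ)) * condNE p (W j) (W (j - 1))
      ≤ subEnt p V ∧
    (subEnt p (W (j - 1))
        + ((m : ℝ) - (Module.finrank F ↥(W (j - 1)) : ℝ)) * condNE p (W j) (W (j - 1))
      = subEnt p V ↔ j = r) :=
  stmt_13_general p X hX V hV r W hchain j hj1 hjr
end

section
/- In the setting of m even binary sources with [X1;...;Xm] = L·[Y1;...;Ym] as above, the subspace W = span(X1+...+Xm) is contained in W^(1) = span(X1+X2, X3+X4, ..., X_{m-1}+X_m) = span(Y2, Y4, ..., Y_m), and the normalized entropy of W^(1) equals h(p): H(Y2,Y4,...,Y_m)/(m/2) = h(p); consequently the selected-subspace sum rate m·h(p) is strictly smaller than both the common-code sum rate m·H(Y2+Y4+...+Y_m) and the Slepian-Wolf sum rate (m/2)(1+h(p)). -/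
open scoped BigOperators

/-- Binary entropy function (in bits). -/
noncomputable def binH (p : ℝ) : ℝ :=
  -(p * Real.logb 2 p) - (1 - p) * Real.logb 2 (1 - p)

/-- The pmf of a `Bernoulli(p)` random variable with values in `F_2`. -/
noncomputable def bern (p : ℝ) (b : ZMod 2) : ℝ := if b = 1 then p else 1 - p

/-- The joint pmf of the independent sources `Y1,...,Y_{2k}` (sample space: the vector
of `Y`-values), `Y i ~ Bern(1/2)` for `i` odd (`0`-indexed even) and `Y i ~ Bern(p)`
for `i` even (`0`-indexed odd). -/
noncomputable def srcP (k : ℕ) (p : ℝ) : (Fin (2 * k) → ZMod 2) → ℝ :=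
  fun ω => ∏ j : Fin (2 * k), bern (if (j : ℕ) % 2 = 0 then 1 / 2 else p) (ω j)

open Classical in
/-- The source `X i = Y1 + ... + Y_i` (i.e. `[X1;...;Xm] = L·[Y1;...;Ym]` with `L`
lower-triangular all-ones), as a random variable on the sample space of `Y`-values. -/
noncomputable def Xrv (k : ℕ) (i : Fin (2 * k)) : (Fin (2 * k) → ZMod 2) → ZMod 2 :=
  fun ω => ∑ j ∈ Finset.univ.filter (fun j : Fin (2 * k) => (j : ℕ) ≤ (i : ℕ)), ω j

open Finset Real

/-!
Over `𝔽₂` the pair sums `X_{2j-1} + X_{2j}` are exactly `Y_{2j}`, and grouping `∑ X_i` into these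
pairs gives `∑ X_i = ∑_j Y_{2j}`; so everything is governed by the independent `Bernoulli(p)`
coordinates `Y_2, Y_4, …, Y_m`, whose joint entropy is `k h(p)`. Their parity is
`Bernoulli((1 - (1 - 2p)^k) / 2)` (piling-up lemma), and for `k > 1` this parameter lies strictly
between `p` and `1/2`, so monotonicity of `h` on `[0, 1/2]` gives the first strict inequality; the
second is `h(p) < 1`.
-/

section FiberMass

variable {Ω α β : Type*} [Fintype Ω]

open Classical in
noncomputable def fiberMass (P : Ω → ℝ) (f : Ω → β) (b : β) : ℝ :=
  ∑ ω ∈ univ.filter (fun ω => f ω = b), P ω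

theorem mapEnt_eq_sum_negMulLog [Fintype β] (P : Ω → ℝ) (f : Ω → β) :
    mapEnt P f = (∑ b, negMulLog (fiberMass P f b)) / log 2 := by
  rw [mapEnt, sum_div]
  refine sum_congr rfl fun b _ => ?_
  rw [negMulLog, logb, fiberMass]
  ring

theorem sum_fiberMass [Fintype β] (P : Ω → ℝ) (f : Ω → β) :
    ∑ b, fiberMass P f b = ∑ ω, P ω := by
  classical
  exact sum_fiberwise univ f P

theorem fiberMass_comp [Fintype α] [DecidableEq β] (P : Ω → ℝ) (g : Ω → α) (G : α → β)
    (b : β) :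
    fiberMass P (fun ω => G (g ω)) b = ∑ a ∈ univ.filter (fun a => G a = b), fiberMass P g a := by
  classical
  simp only [fiberMass]
  convert (sum_fiberwise_eq_sum_filter univ (univ.filter fun a => G a = b) g P).symm using 2
  simp only [mem_filter, mem_univ, true_and]

theorem fiberMass_comp_of_injective {φ : α → β} (hφ : Function.Injective φ) (P : Ω → ℝ)
    (g : Ω → α) (a : α) : fiberMass P (fun ω => φ (g ω)) (φ a) = fiberMass P g a := by
  classical
  simp only [fiberMass, hφ.eq_iff]

open Classical in
theorem fiberMass_eq_zero_of_notMem_range {f : Ω → β} {b : β} (hb : b ∉ Set.range f)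
    (P : Ω → ℝ) : fiberMass P f b = 0 := by
  rw [fiberMass, sum_eq_zero]
  intro ω hω
  exact absurd ⟨ω, (mem_filter.1 hω).2⟩ hb

theorem mapEnt_comp_of_injective [Fintype α] [Fintype β] {φ : α → β}
    (hφ : Function.Injective φ) (P : Ω → ℝ) (g : Ω → α) :
    mapEnt P (fun ω => φ (g ω)) = mapEnt P g := by
  simp only [mapEnt_eq_sum_negMulLog]
  congr 1
  refine (Fintype.sum_of_injective φ hφ _ _ (fun b hb => ?_)
    (fun a => by rw [fiberMass_comp_of_injective hφ])).symm
  rw [fiberMass_eq_zero_of_notMem_range, negMulLog_zero]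
  rintro ⟨ω, rfl⟩
  exact hb ⟨g ω, rfl⟩

theorem binH_eq_binEntropy_div (p : ℝ) : binH p = binEntropy p / log 2 := by
  rw [binH, binEntropy_eq_negMulLog_add_negMulLog_one_sub, negMulLog, negMulLog, logb, logb]
  ring

theorem sum_zmod_two {M : Type*} [AddCommMonoid M] (f : ZMod 2 → M) :
    ∑ b, f b = f 0 + f 1 :=
  Fin.sum_univ_two f

theorem mapEnt_eq_binH {P : Ω → ℝ} (hP : ∑ ω, P ω = 1) (f : Ω → ZMod 2) :
    mapEnt P f = binH (fiberMass P f 1) := by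
  have hmass : fiberMass P f 0 = 1 - fiberMass P f 1 := by
    rw [← hP, ← sum_fiberMass P f, sum_zmod_two]
    ring
  rw [mapEnt_eq_sum_negMulLog, binH_eq_binEntropy_div, sum_zmod_two,
    binEntropy_eq_negMulLog_add_negMulLog_one_sub, add_comm]
  rw [hmass]

end FiberMass

theorem binH_lt_binH {a b : ℝ} (ha : 0 ≤ a) (hab : a < b) (hb : b ≤ 1 / 2) : binH a < binH b := by
  rw [binH_eq_binEntropy_div, binH_eq_binEntropy_div]
  gcongr
  exact binEntropy_strictMonoOn ⟨ha, by linarith⟩ ⟨by linarith, by linarith⟩ hab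

theorem binH_lt_one {p : ℝ} (hp : p ≠ 1 / 2) : binH p < 1 := by
  rw [binH_eq_binEntropy_div, div_lt_one (log_pos one_lt_two)]
  exact binEntropy_lt_log_two.2 (by simpa using hp)

section Product

variable {ι α β : Type*} [Fintype ι] [Fintype α] [Fintype β]

theorem sum_prod_eq_one [DecidableEq ι] {q : ι → α → ℝ} (hq : ∀ i, ∑ a, q i a = 1) :
    ∑ v : ι → α, ∏ i, q i (v i) = 1 := by
  rw [← Fintype.prod_sum]
  simp [hq]

theorem sum_negMulLog_mul {q : α → ℝ} {r : β → ℝ} (hq : ∑ a, q a = 1) (hr : ∑ b, r b = 1) :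
    ∑ x : α × β, negMulLog (q x.1 * r x.2) = ∑ a, negMulLog (q a) + ∑ b, negMulLog (r b) := by
  simp only [negMulLog_mul, Fintype.sum_prod_type, sum_add_distrib, ← sum_mul, ← mul_sum, hq, hr,
    one_mul]

theorem sum_negMulLog_prod_fin {q : α → ℝ} (hq : ∑ a, q a = 1) (n : ℕ) :
    ∑ v : Fin n → α, negMulLog (∏ i, q (v i)) = n * ∑ a, negMulLog (q a) := by
  induction n with
  | zero => simp
  | succ n ih =>
    rw [← (Fin.consEquiv fun _ => α).sum_comp]
    simp only [Fin.consEquiv, Equiv.coe_fn_mk, Fin.prod_univ_succ, Fin.cons_zero, Fin.cons_succ]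
    rw [sum_negMulLog_mul (r := fun w : Fin n → α => ∏ i, q (w i)) hq
      (sum_prod_eq_one fun _ => hq), ih]
    push_cast
    ring

theorem fiberMass_fst_of_eq_mul {Ω : Type*} [Fintype Ω] (e : Ω ≃ α × β) {P : Ω → ℝ}
    {Q : α → ℝ} {R : β → ℝ} (hP : ∀ ω, P ω = Q (e ω).1 * R (e ω).2) (hR : ∑ b, R b = 1)
    (a : α) : fiberMass P (fun ω => (e ω).1) a = Q a := by
  classical
  rw [fiberMass, sum_filter, ← e.symm.sum_comp]
  simp only [Equiv.apply_symm_apply, hP, Fintype.sum_prod_type]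
  simp [sum_ite_eq', ← mul_sum, hR]

end Product

section Bernoulli

theorem sum_bern (q : ℝ) : ∑ b, bern q b = 1 := by
  simp [sum_zmod_two, bern]

theorem sum_negMulLog_bern (p : ℝ) : ∑ b, negMulLog (bern p b) = binEntropy p := by
  simp [sum_zmod_two, bern, binEntropy_eq_negMulLog_add_negMulLog_one_sub, add_comm]

theorem neg_one_pow_val_sum {ι : Type*} (s : Finset ι) (v : ι → ZMod 2) :
    (-1 : ℝ) ^ (∑ i ∈ s, v i).val = ∏ i ∈ s, (-1 : ℝ) ^ (v i).val := by
  induction s using Finset.cons_induction with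
  | empty => simp
  | cons i s hi ih =>
    rw [sum_cons, prod_cons, ZMod.val_add, ← neg_one_pow_eq_pow_mod_two, pow_add, ih]

theorem sum_prod_bern_filter_sum_eq_one (p : ℝ) {ι : Type*} [Fintype ι] [DecidableEq ι] :
    ∑ v ∈ univ.filter (fun v : ι → ZMod 2 => ∑ i, v i = 1), ∏ i, bern p (v i)
      = (1 - (1 - 2 * p) ^ Fintype.card ι) / 2 := by
  -- Evaluate `E[(-1) ^ (∑ i, v i)]` once by independence and once by splitting on parity.
  have hsign : ∀ b : ZMod 2, (-1 : ℝ) ^ b.val = 1 - 2 * if b = 1 then 1 else 0 := by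
    intro b
    rcases (by decide : ∀ z : ZMod 2, z = 0 ∨ z = 1) b with rfl | rfl <;> norm_num +decide
  have hchar : ∑ v : ι → ZMod 2, (∏ i, bern p (v i)) * (-1 : ℝ) ^ (∑ i, v i).val
      = (1 - 2 * p) ^ Fintype.card ι := by
    simp only [neg_one_pow_val_sum, ← prod_mul_distrib]
    rw [← Fintype.prod_sum (fun (_ : ι) (b : ZMod 2) => bern p b * (-1) ^ b.val)]
    simp [sum_zmod_two, bern, hsign]
    ring
  rw [← hchar]
  simp only [hsign, mul_sub, mul_one, sum_sub_distrib, mul_ite, mul_zero, ← sum_filter,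
    ← sum_mul, sum_prod_eq_one fun _ => sum_bern p]
  ring

end Bernoulli

theorem subEnt_span_range {F Ω κ : Type*} [Field F] [Fintype F] [Fintype Ω] [Fintype κ]
    [DecidableEq κ] (P : Ω → ℝ) {u : κ → Ω → F} (hu : Function.Surjective fun ω j => u j ω) :
    subEnt P (Submodule.span F (Set.range u)) = mapEnt P (fun ω j => u j ω) := by
  classical
  set U := Submodule.span F (Set.range u)
  have hdep : ∀ x ∈ U, ∀ ω ω', (∀ j, u j ω = u j ω') → x ω = x ω' := by
    intro x hx ω ω' h
    obtain ⟨c, rfl⟩ := (Submodule.mem_span_range_iff_exists_fun F).1 hx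
    simp [h]
  let φ : (κ → F) → (U → F) := fun v x => (x : Ω → F) (Function.surjInv hu v)
  have hφ : Function.Injective φ := by
    intro v v' h
    funext j
    rw [← congrFun (Function.surjInv_eq hu v) j, ← congrFun (Function.surjInv_eq hu v') j]
    exact congrFun h ⟨u j, Submodule.subset_span ⟨j, rfl⟩⟩
  rw [subEnt, ← mapEnt_comp_of_injective hφ]
  congr
  funext ω x
  exact hdep x x.2 _ _ fun j =>
    (congrFun (Function.surjInv_eq hu fun j => u j ω) j).symm

section OddEven

variable {k : ℕ} {α : Type*}

-- Indices are 0-based: `oddPart ω` lists the paper's `Y_2, Y_4, …, Y_m`.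
def oddPart (ω : Fin (2 * k) → α) (j : Fin k) : α := ω ⟨2 * j + 1, by have := j.isLt; omega⟩

def evenPart (ω : Fin (2 * k) → α) (j : Fin k) : α := ω ⟨2 * j, by have := j.isLt; omega⟩

def oddEvenEquiv : (Fin (2 * k) → α) ≃ (Fin k → α) × (Fin k → α) where
  toFun ω := (oddPart ω, evenPart ω)
  invFun vw i := if (i : ℕ) % 2 = 1 then vw.1 ⟨i / 2, by omega⟩ else vw.2 ⟨i / 2, by omega⟩
  left_inv ω := by
    funext i
    dsimp only
    split_ifs <;> simp only [oddPart, evenPart] <;> congr 1 <;> ext <;> simp only <;> omega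
  right_inv vw := by
    ext j <;> simp [oddPart, evenPart, Nat.mul_add_div]

@[to_additive]
theorem prod_univ_fin_pairs {M : Type*} [CommMonoid M] (f : Fin (2 * k) → M) :
    ∏ i, f i = ∏ j : Fin k,
      f ⟨2 * j, by have := j.isLt; omega⟩ * f ⟨2 * j + 1, by have := j.isLt; omega⟩ := by
  rw [← (finProdFinEquiv.trans (finCongr (Nat.mul_comm k 2))).prod_comp, Fintype.prod_prod_type]
  refine prod_congr rfl fun j _ => ?_
  rw [Fin.prod_univ_two]
  congr <;> ext <;> simp [finProdFinEquiv]; ring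

end OddEven

section Source

variable (k : ℕ) (p : ℝ)

theorem srcP_eq_mul (ω : Fin (2 * k) → ZMod 2) :
    srcP k p ω = (∏ j, bern p (oddPart ω j)) * ∏ j, bern (1 / 2) (evenPart ω j) := by
  rw [srcP, prod_univ_fin_pairs, ← prod_mul_distrib]
  refine prod_congr rfl fun j _ => ?_
  rw [if_pos (by simp), if_neg (by simp), mul_comm]
  rfl

theorem sum_srcP : ∑ ω, srcP k p ω = 1 :=
  sum_prod_eq_one fun _ => sum_bern _

theorem fiberMass_srcP_oddPart (v : Fin k → ZMod 2) :
    fiberMass (srcP k p) oddPart v = ∏ j, bern p (v j) :=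
  fiberMass_fst_of_eq_mul oddEvenEquiv (Q := fun v => ∏ j, bern p (v j))
    (R := fun w => ∏ j, bern (1 / 2) (w j)) (srcP_eq_mul k p)
    (sum_prod_eq_one fun _ => sum_bern _) v

theorem mapEnt_srcP_oddPart : mapEnt (srcP k p) oddPart = k * binH p := by
  rw [mapEnt_eq_sum_negMulLog]
  simp only [fiberMass_srcP_oddPart]
  rw [sum_negMulLog_prod_fin (sum_bern p), sum_negMulLog_bern, binH_eq_binEntropy_div,
    mul_div_assoc]

theorem mapEnt_srcP_sum_oddPart :
    mapEnt (srcP k p) (fun ω => ∑ j, oddPart ω j) = binH ((1 - (1 - 2 * p) ^ k) / 2) := by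
  rw [mapEnt_eq_binH (sum_srcP k p), fiberMass_comp _ oddPart fun v : Fin k → ZMod 2 => ∑ j, v j]
  simp only [fiberMass_srcP_oddPart]
  rw [sum_prod_bern_filter_sum_eq_one, Fintype.card_fin]

theorem subEnt_span_oddPart :
    subEnt (srcP k p) (Submodule.span (ZMod 2) (Set.range fun j : Fin k =>
      fun ω : Fin (2 * k) → ZMod 2 => oddPart ω j)) = k * binH p := by
  rw [subEnt_span_range _ fun v => ⟨oddEvenEquiv.symm (v, 0),
    congrArg Prod.fst (oddEvenEquiv.apply_symm_apply (v, 0))⟩]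
  exact mapEnt_srcP_oddPart k p

end Source

section PartialSums

variable {k : ℕ}

theorem Xrv_succ {i : ℕ} (hi : i + 1 < 2 * k) (ω : Fin (2 * k) → ZMod 2) :
    Xrv k ⟨i + 1, hi⟩ ω = Xrv k ⟨i, by omega⟩ ω + ω ⟨i + 1, hi⟩ := by
  classical
  have hfilter : univ.filter (fun j : Fin (2 * k) => (j : ℕ) ≤ i + 1)
      = insert ⟨i + 1, hi⟩ (univ.filter fun j : Fin (2 * k) => (j : ℕ) ≤ i) := by
    ext j
    simp only [mem_filter, mem_univ, true_and, mem_insert, Fin.ext_iff]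
    omega
  simp only [Xrv]
  convert sum_insert (f := ω) (show ⟨i + 1, hi⟩ ∉ univ.filter fun j : Fin (2 * k) => (j : ℕ) ≤ i
    by simp) using 1
  · rw [hfilter]
  · rw [add_comm]

theorem Xrv_add_Xrv_succ (j : Fin k) (ω : Fin (2 * k) → ZMod 2) :
    Xrv k ⟨2 * j, by have := j.isLt; omega⟩ ω + Xrv k ⟨2 * j + 1, by have := j.isLt; omega⟩ ω =
      oddPart ω j := by
  rw [Xrv_succ, ← add_assoc, CharTwo.add_self_eq_zero, zero_add, oddPart]

theorem sum_Xrv : (fun ω => ∑ i, Xrv k i ω) = ∑ j : Fin k, fun ω => oddPart ω j := by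
  funext ω
  rw [Finset.sum_apply, sum_univ_fin_pairs]
  exact sum_congr rfl fun j _ => Xrv_add_Xrv_succ j ω

end PartialSums

/-- For `m = 2k > 2` even binary sources as above: `W = span(X1+...+Xm)` is contained in
`W^(1) = span(X1+X2, ..., X_{m-1}+X_m) = span(Y2, Y4, ..., Ym)`; the normalized entropy
of `W^(1)` is `H(Y2,...,Ym)/(m/2) = h(p)`; and the selected-subspace sum rate `m·h(p)` is
strictly smaller than both the common-code sum rate `m·H(Y2+Y4+...+Ym)` and the
Slepian-Wolf sum rate `(m/2)(1+h(p))`. -/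
theorem stmt_19 (k : ℕ) (hk : 1 < k) (p : ℝ) (hp : 0 < p) (hp2 : p < 1 / 2) :
    Submodule.span (ZMod 2) {fun ω : Fin (2 * k) → ZMod 2 => ∑ i : Fin (2 * k), Xrv k i ω}
        ≤ Submodule.span (ZMod 2)
            (Set.range fun j : Fin k =>
              (fun ω : Fin (2 * k) → ZMod 2 => ω ⟨2 * (j : ℕ) + 1, by omega⟩)) ∧
      Submodule.span (ZMod 2)
          (Set.range fun j : Fin k =>
            (fun ω : Fin (2 * k) → ZMod 2 =>
              Xrv k ⟨2 * (j : ℕ), by omega⟩ ω + Xrv k ⟨2 * (j : ℕ) + 1, by omega⟩ ω))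
        = Submodule.span (ZMod 2)
            (Set.range fun j : Fin k =>
              (fun ω : Fin (2 * k) → ZMod 2 => ω ⟨2 * (j : ℕ) + 1, by omega⟩)) ∧
      subEnt (srcP k p)
          (Submodule.span (ZMod 2)
            (Set.range fun j : Fin k =>
              (fun ω : Fin (2 * k) → ZMod 2 => ω ⟨2 * (j : ℕ) + 1, by omega⟩))) / (k : ℝ)
        = binH p ∧
      (2 * k : ℝ) * binH p
        < (2 * k : ℝ) *
            mapEnt (srcP k p)
              (fun ω : Fin (2 * k) → ZMod 2 => ∑ j : Fin k, ω ⟨2 * (j : ℕ) + 1, by omega⟩) ∧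
      (2 * k : ℝ) * binH p < (k : ℝ) * (1 + binH p) := by
  have hk0 : (0 : ℝ) < k := by positivity
  have hq : 0 < 1 - 2 * p := by linarith
  have hpow : (1 - 2 * p) ^ k < 1 - 2 * p := pow_lt_self_of_lt_one₀ hq (by linarith) hk
  have hbin : binH p < 1 := binH_lt_one hp2.ne
  refine ⟨?_, ?_, ?_, ?_, by nlinarith⟩
  · rw [Submodule.span_le, Set.singleton_subset_iff, sum_Xrv]
    exact Submodule.sum_mem _ fun j _ => Submodule.subset_span ⟨j, rfl⟩
  · simp only [Xrv_add_Xrv_succ]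
    rfl
  · exact (div_eq_iff hk0.ne').2 ((subEnt_span_oddPart k p).trans (mul_comm _ _))
  · calc (2 * k : ℝ) * binH p < 2 * k * binH ((1 - (1 - 2 * p) ^ k) / 2) := by
          gcongr
          exact binH_lt_binH hp.le (by linarith) (by linarith [pow_pos hq k])
      _ = _ := congrArg (_ * ·) (mapEnt_srcP_sum_oddPart k p).symm
end
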